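/- Let n = p + q with p ≥ m, and let G ∈ ℝ^{n×m} have full column rank, written in block form G = [G1; G2] with G1 ∈ ℝ^{p×m} and G2 ∈ ℝ^{q×m}. Let A ∈ ℝ^{p×p} and B ∈ ℝ^{q×q} be symmetric positive semidefinite with λ_min(A) ≥ λ_max(B), and let C ∈ ℝ^{n×n} be the block-diagonal matrix with diagonal blocks A and B. If ‖C − G Gᵀ‖_F < λ_min(GᵀG)/√2, then λ_min(G1ᵀ G1) ≥ λ_max(G2ᵀ G2). -/

import Mathlib

open Matrix

/-- Frobenius inner product of two real matrices. -/
noncomputable def finner {m n : Type*} [Fintype m] [Fintype n]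
    (A B : Matrix m n ℝ) : ℝ := (Aᵀ * B).trace

/-- Frobenius norm of a real matrix. -/
noncomputable def fnorm {m n : Type*} [Fintype m] [Fintype n]
    (A : Matrix m n ℝ) : ℝ := Real.sqrt (finner A A)

open scoped Classical in
/-- Square root of a positive semidefinite real matrix (junk value `0` otherwise). -/
noncomputable def psqrt {r : ℕ} (M : Matrix (Fin r) (Fin r) ℝ) : Matrix (Fin r) (Fin r) ℝ :=
  if h : M.PosSemidef then
    (h.1.eigenvectorUnitary : Matrix (Fin r) (Fin r) ℝ) * diagonal ((↑) ∘ Real.sqrt ∘ h.1.eigenvalues) *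
      (star (h.1.eigenvectorUnitary : Matrix (Fin r) (Fin r) ℝ))
  else 0

open scoped Classical in
/-- Smallest eigenvalue of a symmetric real matrix (junk value `0` otherwise). -/
noncomputable def lammin {r : ℕ} (M : Matrix (Fin r) (Fin r) ℝ) : ℝ :=
  if h : M.IsHermitian then ⨅ i, h.eigenvalues i else 0

open scoped Classical in
/-- Largest eigenvalue of a symmetric real matrix (junk value `0` otherwise). -/
noncomputable def lammax {r : ℕ} (M : Matrix (Fin r) (Fin r) ℝ) : ℝ :=
  if h : M.IsHermitian then ⨆ i, h.eigenvalues i else 0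

/-! Write `μ₁ = λ_min(G₁ᵀG₁)` and `μ₂ = λ_max(G₂ᵀG₂)`. The squared Frobenius norm of
`C - GGᵀ` splits over the blocks as `‖A - G₁G₁ᵀ‖² + 2‖G₁G₂ᵀ‖² + ‖B - G₂G₂ᵀ‖²`.
Perturbation bounds give `λ_min(A) - μ₁ ≤ ‖A - G₁G₁ᵀ‖` (via `λ_min(G₁G₁ᵀ) ≤ μ₁`, which is
where `m ≤ p` enters) and `μ₂ - λ_max(B) ≤ ‖B - G₂G₂ᵀ‖`, and testing `G₁G₂ᵀ` on `G₂v` for a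
top eigenvector `v` of `G₂ᵀG₂` gives `‖G₁G₂ᵀ‖² ≥ μ₁μ₂`. If `μ₂ > μ₁`, then
`(μ₁ + μ₂)² = (μ₂ - μ₁)² + 4μ₁μ₂ ≤ 2‖C - GGᵀ‖² < λ_min(GᵀG)² ≤ (μ₁ + μ₂)²`,
the last step by Weyl's inequality for `GᵀG = G₁ᵀG₁ + G₂ᵀG₂`. -/

section Frobenius

variable {m n : Type*} [Fintype m] [Fintype n]

lemma finner_self_eq_sum (M : Matrix m n ℝ) : finner M M = ∑ i, ∑ j, M i j ^ 2 := by
  simp only [finner, trace, diag, mul_apply, transpose_apply, sq]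
  exact Finset.sum_comm

lemma finner_self_nonneg (M : Matrix m n ℝ) : 0 ≤ finner M M := by
  rw [finner_self_eq_sum]
  positivity

lemma fnorm_nonneg (M : Matrix m n ℝ) : 0 ≤ fnorm M := Real.sqrt_nonneg _

lemma fnorm_sq (M : Matrix m n ℝ) : fnorm M ^ 2 = finner M M :=
  Real.sq_sqrt (finner_self_nonneg M)

lemma finner_transpose_self (M : Matrix m n ℝ) : finner Mᵀ Mᵀ = finner M M := by
  rw [finner_self_eq_sum, finner_self_eq_sum]
  exact Finset.sum_comm

lemma finner_neg_self (M : Matrix m n ℝ) : finner (-M) (-M) = finner M M := by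
  simp [finner_self_eq_sum]

lemma fnorm_sub_comm (M N : Matrix m n ℝ) : fnorm (M - N) = fnorm (N - M) := by
  rw [fnorm, fnorm, ← neg_sub, finner_neg_self]

lemma finner_fromBlocks_self {m' n' : Type*} [Fintype m'] [Fintype n']
    (P : Matrix m n ℝ) (Q : Matrix m n' ℝ) (R : Matrix m' n ℝ) (S : Matrix m' n' ℝ) :
    finner (fromBlocks P Q R S) (fromBlocks P Q R S) =
      finner P P + finner Q Q + finner R R + finner S S := by
  simp only [finner_self_eq_sum, Fintype.sum_sum_type, fromBlocks_apply₁₁, fromBlocks_apply₁₂,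
    fromBlocks_apply₂₁, fromBlocks_apply₂₂, Finset.sum_add_distrib]
  ring

lemma sq_dotProduct_le (x y : n → ℝ) : (x ⬝ᵥ y) ^ 2 ≤ (x ⬝ᵥ x) * (y ⬝ᵥ y) := by
  simpa only [dotProduct, sq] using Finset.sum_mul_sq_le_sq_mul_sq Finset.univ x y

lemma mulVec_dotProduct_mulVec_le (M : Matrix m n ℝ) (x : n → ℝ) :
    (M *ᵥ x) ⬝ᵥ (M *ᵥ x) ≤ finner M M * (x ⬝ᵥ x) := by
  rw [finner_self_eq_sum, Finset.sum_mul]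
  refine Finset.sum_le_sum fun i _ => ?_
  simpa only [mulVec, dotProduct, sq] using sq_dotProduct_le (fun j => M i j) x

lemma dotProduct_mulVec_le_fnorm (M : Matrix n n ℝ) {x : n → ℝ} (hx : x ⬝ᵥ x = 1) :
    x ⬝ᵥ (M *ᵥ x) ≤ fnorm M := by
  have hsq : (x ⬝ᵥ (M *ᵥ x)) ^ 2 ≤ finner M M := by
    simpa [hx] using (sq_dotProduct_le x (M *ᵥ x)).trans_eq (by rw [hx, one_mul])
      |>.trans (mulVec_dotProduct_mulVec_le M x)
  exact (le_abs_self _).trans (Real.abs_le_sqrt hsq)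

end Frobenius

section Eigenvalues

variable {r : ℕ} {M : Matrix (Fin r) (Fin r) ℝ}

lemma lammin_eq (h : M.IsHermitian) : lammin M = ⨅ i, h.eigenvalues i := by
  rw [lammin, dif_pos h]

lemma lammax_eq (h : M.IsHermitian) : lammax M = ⨆ i, h.eigenvalues i := by
  rw [lammax, dif_pos h]

lemma lammin_le_eigenvalues (h : M.IsHermitian) (i : Fin r) : lammin M ≤ h.eigenvalues i :=
  (lammin_eq h).trans_le (ciInf_le (Finite.bddBelow_range _) i)

lemma eigenvalues_le_lammax (h : M.IsHermitian) (i : Fin r) : h.eigenvalues i ≤ lammax M :=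
  (le_ciSup (Finite.bddAbove_range _) i).trans_eq (lammax_eq h).symm

lemma lammin_nonneg (h : M.PosSemidef) : 0 ≤ lammin M := by
  rw [lammin_eq h.1]
  exact Real.iInf_nonneg h.eigenvalues_nonneg

lemma lammax_nonneg (h : M.PosSemidef) : 0 ≤ lammax M := by
  rw [lammax_eq h.1]
  exact Real.iSup_nonneg h.eigenvalues_nonneg

lemma lammin_of_isEmpty [IsEmpty (Fin r)] : lammin M = 0 := by
  unfold lammin; split_ifs <;> simp

lemma lammax_of_isEmpty [IsEmpty (Fin r)] : lammax M = 0 := by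
  unfold lammax; split_ifs <;> simp

lemma eigenvectorBasis_dotProduct_self (h : M.IsHermitian) (i : Fin r) :
    ⇑(h.eigenvectorBasis i) ⬝ᵥ ⇑(h.eigenvectorBasis i) = 1 := by
  have hnorm : ‖h.eigenvectorBasis i‖ = 1 := h.eigenvectorBasis.orthonormal.1 i
  have hinner := real_inner_self_eq_norm_sq (h.eigenvectorBasis i)
  rw [hnorm, one_pow, EuclideanSpace.inner_eq_star_dotProduct] at hinner
  simpa using hinner

lemma exists_dotProduct_self_eq_one_mulVec_eq_lammin [NeZero r] (h : M.IsHermitian) :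
    ∃ u : Fin r → ℝ, u ⬝ᵥ u = 1 ∧ M *ᵥ u = lammin M • u := by
  obtain ⟨i, hi⟩ := Finite.exists_min h.eigenvalues
  have hmin : lammin M = h.eigenvalues i :=
    le_antisymm (lammin_le_eigenvalues h i) ((le_ciInf hi).trans_eq (lammin_eq h).symm)
  exact ⟨_, eigenvectorBasis_dotProduct_self h i, hmin ▸ h.mulVec_eigenvectorBasis i⟩

lemma exists_dotProduct_self_eq_one_mulVec_eq_lammax [NeZero r] (h : M.IsHermitian) :
    ∃ u : Fin r → ℝ, u ⬝ᵥ u = 1 ∧ M *ᵥ u = lammax M • u := by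
  obtain ⟨i, hi⟩ := Finite.exists_max h.eigenvalues
  have hmax : lammax M = h.eigenvalues i :=
    le_antisymm ((lammax_eq h).trans_le (ciSup_le hi)) (eigenvalues_le_lammax h i)
  exact ⟨_, eigenvectorBasis_dotProduct_self h i, hmax ▸ h.mulVec_eigenvectorBasis i⟩

lemma transpose_eigenvectorUnitary_mulVec_dotProduct_self (h : M.IsHermitian) (v : Fin r → ℝ) :
    ((h.eigenvectorUnitary : Matrix (Fin r) (Fin r) ℝ)ᵀ *ᵥ v) ⬝ᵥ
      ((h.eigenvectorUnitary : Matrix (Fin r) (Fin r) ℝ)ᵀ *ᵥ v) = v ⬝ᵥ v := by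
  have hUUt : (h.eigenvectorUnitary : Matrix (Fin r) (Fin r) ℝ) *
      (h.eigenvectorUnitary : Matrix (Fin r) (Fin r) ℝ)ᵀ = 1 := by
    simpa [star_eq_conjTranspose] using Unitary.coe_mul_star_self h.eigenvectorUnitary
  rw [dotProduct_mulVec, vecMul_transpose, mulVec_mulVec, hUUt, one_mulVec]

lemma dotProduct_mulVec_eq_sum_eigenvalues (h : M.IsHermitian) (v : Fin r → ℝ) :
    v ⬝ᵥ (M *ᵥ v) =
      ∑ i, h.eigenvalues i * ((h.eigenvectorUnitary : Matrix (Fin r) (Fin r) ℝ)ᵀ *ᵥ v) i ^ 2 := by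
  set U : Matrix (Fin r) (Fin r) ℝ := ↑h.eigenvectorUnitary
  have hM : M = U * diagonal h.eigenvalues * Uᵀ := by
    simpa [U, Unitary.conjStarAlgAut_apply, star_eq_conjTranspose] using h.spectral_theorem
  calc v ⬝ᵥ (M *ᵥ v) = (Uᵀ *ᵥ v) ⬝ᵥ (diagonal h.eigenvalues *ᵥ (Uᵀ *ᵥ v)) := by
        conv_lhs => rw [hM]
        rw [← mulVec_mulVec, ← mulVec_mulVec, dotProduct_mulVec, ← mulVec_transpose]
    _ = _ := by simp only [dotProduct, mulVec_diagonal, sq, mul_left_comm]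

end Eigenvalues

section Rayleigh

variable {r : ℕ} {M S : Matrix (Fin r) (Fin r) ℝ}

lemma lammin_mul_dotProduct_self_le (h : M.IsHermitian) (v : Fin r → ℝ) :
    lammin M * (v ⬝ᵥ v) ≤ v ⬝ᵥ (M *ᵥ v) := by
  rw [dotProduct_mulVec_eq_sum_eigenvalues h,
    ← transpose_eigenvectorUnitary_mulVec_dotProduct_self h, dotProduct, Finset.mul_sum]
  refine Finset.sum_le_sum fun i _ => ?_
  rw [← sq]
  exact mul_le_mul_of_nonneg_right (lammin_le_eigenvalues h i) (sq_nonneg _)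

lemma dotProduct_mulVec_le_lammax_mul (h : M.IsHermitian) (v : Fin r → ℝ) :
    v ⬝ᵥ (M *ᵥ v) ≤ lammax M * (v ⬝ᵥ v) := by
  rw [dotProduct_mulVec_eq_sum_eigenvalues h,
    ← transpose_eigenvectorUnitary_mulVec_dotProduct_self h, dotProduct, Finset.mul_sum]
  refine Finset.sum_le_sum fun i _ => ?_
  rw [← sq]
  exact mul_le_mul_of_nonneg_right (eigenvalues_le_lammax h i) (sq_nonneg _)

lemma lammin_nonpos_of_mulVec_eq_zero (h : M.IsHermitian) {x : Fin r → ℝ} (hx : x ≠ 0)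
    (hMx : M *ᵥ x = 0) : lammin M ≤ 0 := by
  have hpos : 0 < x ⬝ᵥ x := (Fintype.sum_nonneg fun i => mul_self_nonneg (x i)).lt_of_ne'
    (dotProduct_self_eq_zero.not.mpr hx)
  have := lammin_mul_dotProduct_self_le h x
  rw [hMx, dotProduct_zero] at this
  exact nonpos_of_mul_nonpos_left this hpos

lemma lammin_add_le (hM : M.IsHermitian) (hS : S.IsHermitian) :
    lammin (M + S) ≤ lammin M + lammax S := by
  obtain _ | r := r
  · simp [lammin_of_isEmpty, lammax_of_isEmpty]
  obtain ⟨x, hx, hMx⟩ := exists_dotProduct_self_eq_one_mulVec_eq_lammin hM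
  have hlow := lammin_mul_dotProduct_self_le (hM.add hS) x
  have hupp := dotProduct_mulVec_le_lammax_mul hS x
  rw [add_mulVec, dotProduct_add, hMx, dotProduct_smul, smul_eq_mul, hx] at hlow
  rw [hx] at hupp
  linarith

lemma lammin_sub_lammin_le_fnorm (hM : M.IsHermitian) (hS : S.IsHermitian) :
    lammin M - lammin S ≤ fnorm (M - S) := by
  obtain _ | r := r
  · simp [lammin_of_isEmpty, fnorm_nonneg]
  obtain ⟨x, hx, hSx⟩ := exists_dotProduct_self_eq_one_mulVec_eq_lammin hS
  have hlow := lammin_mul_dotProduct_self_le hM x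
  have hdiff := dotProduct_mulVec_le_fnorm (M - S) hx
  rw [sub_mulVec, dotProduct_sub, hSx, dotProduct_smul, smul_eq_mul, hx] at hdiff
  rw [hx] at hlow
  linarith

lemma lammax_sub_lammax_le_fnorm (hM : M.IsHermitian) (hS : S.IsHermitian) :
    lammax M - lammax S ≤ fnorm (M - S) := by
  obtain _ | r := r
  · simp [lammax_of_isEmpty, fnorm_nonneg]
  obtain ⟨x, hx, hMx⟩ := exists_dotProduct_self_eq_one_mulVec_eq_lammax hM
  have hupp := dotProduct_mulVec_le_lammax_mul hS x
  have hdiff := dotProduct_mulVec_le_fnorm (M - S) hx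
  rw [sub_mulVec, dotProduct_sub, hMx, dotProduct_smul, smul_eq_mul, hx] at hdiff
  rw [hx] at hupp
  linarith

end Rayleigh

section Gram

lemma posSemidef_transpose_mul_self {k l : Type*} [Fintype k] [Fintype l]
    (M : Matrix k l ℝ) : (Mᵀ * M).PosSemidef := by
  simpa [conjTranspose_eq_transpose_of_trivial] using posSemidef_conjTranspose_mul_self M

lemma posSemidef_self_mul_transpose {k l : Type*} [Fintype k] [Fintype l]
    (M : Matrix k l ℝ) : (M * Mᵀ).PosSemidef := by
  simpa using posSemidef_transpose_mul_self Mᵀ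

lemma mulVec_dotProduct_mulVec_eq {k l : Type*} [Fintype k] [Fintype l]
    (M : Matrix k l ℝ) (v : l → ℝ) : (M *ᵥ v) ⬝ᵥ (M *ᵥ v) = v ⬝ᵥ ((Mᵀ * M) *ᵥ v) := by
  rw [← mulVec_mulVec, dotProduct_mulVec v Mᵀ, vecMul_transpose]

lemma mulVec_dotProduct_mulVec_of_eigen {k l : Type*} [Fintype k] [Fintype l]
    (M : Matrix k l ℝ) {v : l → ℝ} {μ : ℝ} (hv : v ⬝ᵥ v = 1) (hMv : (Mᵀ * M) *ᵥ v = μ • v) :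
    (M *ᵥ v) ⬝ᵥ (M *ᵥ v) = μ := by
  rw [mulVec_dotProduct_mulVec_eq, hMv, dotProduct_smul, hv, smul_eq_mul, mul_one]

lemma mulVec_dotProduct_mul_transpose_mulVec_of_eigen {k l : Type*} [Fintype k] [Fintype l]
    (M : Matrix k l ℝ) {v : l → ℝ} {μ : ℝ} (hv : v ⬝ᵥ v = 1) (hMv : (Mᵀ * M) *ᵥ v = μ • v) :
    (M *ᵥ v) ⬝ᵥ ((M * Mᵀ) *ᵥ (M *ᵥ v)) = μ ^ 2 := by
  have := mulVec_dotProduct_mulVec_eq Mᵀ (M *ᵥ v)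
  rw [transpose_transpose, mulVec_mulVec, hMv, smul_dotProduct, dotProduct_smul, hv] at this
  rw [← this, smul_eq_mul, smul_eq_mul, mul_one, sq]

variable {p m : ℕ}

lemma exists_ne_zero_transpose_mulVec_eq_zero (hmp : m ≤ p) (M : Matrix (Fin p) (Fin m) ℝ)
    {u : Fin m → ℝ} (hu : u ≠ 0) (hMu : M *ᵥ u = 0) : ∃ x ≠ 0, Mᵀ *ᵥ x = 0 := by
  by_contra! hker
  have hinj : Function.Injective Mᵀ.mulVecLin :=
    (injective_iff_map_eq_zero _).mpr fun x hx => by_contra fun hx0 => hker x hx0 hx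
  have hpm : p ≤ m := by simpa using LinearMap.finrank_le_finrank_of_injective hinj
  obtain rfl := le_antisymm hmp hpm
  have hunit : IsUnit M := (isUnit_transpose M).mp (mulVec_injective_iff_isUnit.mp hinj)
  exact hu (mulVec_injective_iff_isUnit.mpr hunit (hMu.trans (mulVec_zero M).symm))

lemma lammax_transpose_mul_self_le (M : Matrix (Fin p) (Fin m) ℝ) :
    lammax (Mᵀ * M) ≤ lammax (M * Mᵀ) := by
  have hL := lammax_nonneg (posSemidef_self_mul_transpose M)
  obtain _ | m := m
  · simpa [lammax_of_isEmpty] using hL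
  obtain ⟨v, hv, hMv⟩ :=
    exists_dotProduct_self_eq_one_mulVec_eq_lammax (posSemidef_transpose_mul_self M).1
  have hray := dotProduct_mulVec_le_lammax_mul (posSemidef_self_mul_transpose M).1 (M *ᵥ v)
  rw [mulVec_dotProduct_mulVec_of_eigen M hv hMv,
    mulVec_dotProduct_mul_transpose_mulVec_of_eigen M hv hMv] at hray
  nlinarith

lemma lammin_mul_transpose_self_le [NeZero m] (hmp : m ≤ p) (M : Matrix (Fin p) (Fin m) ℝ) :
    lammin (M * Mᵀ) ≤ lammin (Mᵀ * M) := by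
  obtain ⟨u, hu, hMu⟩ :=
    exists_dotProduct_self_eq_one_mulVec_eq_lammin (posSemidef_transpose_mul_self M).1
  set μ := lammin (Mᵀ * M)
  have hz := mulVec_dotProduct_mulVec_of_eigen M hu hMu
  have hμ0 : 0 ≤ μ := lammin_nonneg (posSemidef_transpose_mul_self M)
  rcases hμ0.eq_or_lt with hμ | hμ
  · -- `μ = 0`: then `M` has a kernel, so (as `m ≤ p`) `Mᵀ` has one too
    have hu0 : u ≠ 0 := by rintro rfl; simp at hu
    obtain ⟨x, hx, hMx⟩ := exists_ne_zero_transpose_mulVec_eq_zero hmp M hu0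
      (dotProduct_self_eq_zero.mp (hz.trans hμ.symm))
    rw [← hμ]
    exact lammin_nonpos_of_mulVec_eq_zero (posSemidef_self_mul_transpose M).1 hx
      (by rw [← mulVec_mulVec, hMx, mulVec_zero])
  · have hray := lammin_mul_dotProduct_self_le (posSemidef_self_mul_transpose M).1 (M *ᵥ u)
    rw [hz, mulVec_dotProduct_mul_transpose_mulVec_of_eigen M hu hMu, sq] at hray
    exact le_of_mul_le_mul_right hray hμ

lemma lammin_sub_lammin_transpose_mul_self_le_fnorm [NeZero m] (hmp : m ≤ p)
    {A : Matrix (Fin p) (Fin p) ℝ} (hA : A.IsHermitian) (M : Matrix (Fin p) (Fin m) ℝ) :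
    lammin A - lammin (Mᵀ * M) ≤ fnorm (A - M * Mᵀ) :=
  (sub_le_sub_left (lammin_mul_transpose_self_le hmp M) _).trans
    (lammin_sub_lammin_le_fnorm hA (posSemidef_self_mul_transpose M).1)

lemma lammax_transpose_mul_self_sub_lammax_le_fnorm {B : Matrix (Fin p) (Fin p) ℝ}
    (hB : B.IsHermitian) (M : Matrix (Fin p) (Fin m) ℝ) :
    lammax (Mᵀ * M) - lammax B ≤ fnorm (B - M * Mᵀ) := by
  rw [fnorm_sub_comm]
  exact (sub_le_sub_right (lammax_transpose_mul_self_le M) _).trans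
    (lammax_sub_lammax_le_fnorm (posSemidef_self_mul_transpose M).1 hB)

lemma lammin_mul_lammax_le_finner {a b : ℕ} (P : Matrix (Fin a) (Fin m) ℝ)
    (Q : Matrix (Fin b) (Fin m) ℝ) :
    lammin (Pᵀ * P) * lammax (Qᵀ * Q) ≤ finner (P * Qᵀ) (P * Qᵀ) := by
  obtain _ | m := m
  · simp [lammax_of_isEmpty, finner_self_nonneg]
  obtain ⟨v, hv, hQv⟩ :=
    exists_dotProduct_self_eq_one_mulVec_eq_lammax (posSemidef_transpose_mul_self Q).1
  set μ := lammax (Qᵀ * Q)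
  have himage : (P * Qᵀ) *ᵥ (Q *ᵥ v) = μ • (P *ᵥ v) := by
    rw [mulVec_mulVec, Matrix.mul_assoc, ← mulVec_mulVec, hQv, mulVec_smul]
  have hupp := mulVec_dotProduct_mulVec_le (P * Qᵀ) (Q *ᵥ v)
  have hlow := lammin_mul_dotProduct_self_le (posSemidef_transpose_mul_self P).1 v
  rw [himage, smul_dotProduct, dotProduct_smul, mulVec_dotProduct_mulVec_eq,
    mulVec_dotProduct_mulVec_of_eigen Q hv hQv] at hupp
  rw [hv, mul_one] at hlow
  have hμ0 : 0 ≤ μ := lammax_nonneg (posSemidef_transpose_mul_self Q)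
  rcases hμ0.eq_or_lt with hμ | hμ
  · rw [← hμ, mul_zero]
    exact finner_self_nonneg _
  · simp only [smul_eq_mul] at hupp
    nlinarith [mul_le_mul_of_nonneg_left hlow (mul_nonneg hμ.le hμ.le)]

end Gram

section Blocks

variable {k l n : Type*} [Fintype k] [Fintype l]

lemma transpose_fromRows_mul_fromRows (G₁ : Matrix k n ℝ) (G₂ : Matrix l n ℝ) :
    (fromRows G₁ G₂)ᵀ * fromRows G₁ G₂ = G₁ᵀ * G₁ + G₂ᵀ * G₂ := by
  rw [transpose_fromRows, fromCols_mul_fromRows]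

lemma fnorm_sq_fromBlocks_sub_fromRows_mul_transpose [Fintype n] (A : Matrix k k ℝ)
    (B : Matrix l l ℝ) (G₁ : Matrix k n ℝ) (G₂ : Matrix l n ℝ) :
    fnorm (fromBlocks A 0 0 B - fromRows G₁ G₂ * (fromRows G₁ G₂)ᵀ) ^ 2 =
      fnorm (A - G₁ * G₁ᵀ) ^ 2 + 2 * finner (G₁ * G₂ᵀ) (G₁ * G₂ᵀ) +
        fnorm (B - G₂ * G₂ᵀ) ^ 2 := by
  have hblocks : fromBlocks A 0 0 B - fromRows G₁ G₂ * (fromRows G₁ G₂)ᵀ =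
      fromBlocks (A - G₁ * G₁ᵀ) (-(G₁ * G₂ᵀ)) (-(G₂ * G₁ᵀ)) (B - G₂ * G₂ᵀ) := by
    rw [transpose_fromRows, fromRows_mul_fromCols, sub_eq_add_neg, fromBlocks_neg,
      fromBlocks_add]
    simp only [sub_eq_add_neg, zero_add]
  have hswap : G₂ * G₁ᵀ = (G₁ * G₂ᵀ)ᵀ := by rw [transpose_mul, transpose_transpose]
  rw [hblocks, fnorm_sq, fnorm_sq, fnorm_sq, finner_fromBlocks_self, finner_neg_self,
    finner_neg_self, hswap, finner_transpose_self]
  ring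

end Blocks

theorem stmt_8_general {p q m : ℕ} (hpm : m ≤ p)
    (G1 : Matrix (Fin p) (Fin m) ℝ) (G2 : Matrix (Fin q) (Fin m) ℝ)
    (G : Matrix (Fin p ⊕ Fin q) (Fin m) ℝ) (hG : G = Matrix.fromRows G1 G2)
    (A : Matrix (Fin p) (Fin p) ℝ) (B : Matrix (Fin q) (Fin q) ℝ)
    (hA : A.PosSemidef) (hB : B.PosSemidef)
    (hAB : lammax B ≤ lammin A)
    (C : Matrix (Fin p ⊕ Fin q) (Fin p ⊕ Fin q) ℝ)
    (hC : C = Matrix.fromBlocks A 0 0 B)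
    (hclose : fnorm (C - G * Gᵀ) < lammin (Gᵀ * G) / Real.sqrt 2) :
    lammax (G2ᵀ * G2) ≤ lammin (G1ᵀ * G1) := by
  subst hG hC
  by_contra! hlt
  have : NeZero m := ⟨by
    rintro rfl
    rw [lammax_of_isEmpty] at hlt
    exact hlt.not_ge (lammin_nonneg (posSemidef_transpose_mul_self G1))⟩
  have hgapA := lammin_sub_lammin_transpose_mul_self_le_fnorm hpm hA.1 G1
  have hgapB := lammax_transpose_mul_self_sub_lammax_le_fnorm hB.1 G2
  have hcross := lammin_mul_lammax_le_finner G1 G2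
  have hweyl : lammin ((fromRows G1 G2)ᵀ * fromRows G1 G2) ≤
      lammin (G1ᵀ * G1) + lammax (G2ᵀ * G2) := by
    rw [transpose_fromRows_mul_fromRows]
    exact lammin_add_le (posSemidef_transpose_mul_self G1).1 (posSemidef_transpose_mul_self G2).1
  have hsq : 2 * fnorm (fromBlocks A 0 0 B - fromRows G1 G2 * (fromRows G1 G2)ᵀ) ^ 2 <
      lammin ((fromRows G1 G2)ᵀ * fromRows G1 G2) ^ 2 := by
    have := pow_lt_pow_left₀ hclose (fnorm_nonneg _) two_ne_zero
    rwa [div_pow, Real.sq_sqrt zero_le_two, lt_div_iff₀ two_pos, mul_comm] at this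
  rw [fnorm_sq_fromBlocks_sub_fromRows_mul_transpose] at hsq
  have hgap_sq : (lammax (G2ᵀ * G2) - lammin (G1ᵀ * G1)) ^ 2 ≤
      2 * (fnorm (A - G1 * G1ᵀ) ^ 2 + fnorm (B - G2 * G2ᵀ) ^ 2) := by
    have hgap : lammax (G2ᵀ * G2) - lammin (G1ᵀ * G1) ≤
        fnorm (A - G1 * G1ᵀ) + fnorm (B - G2 * G2ᵀ) := by
      linarith
    nlinarith [pow_le_pow_left₀ (sub_nonneg.mpr hlt.le) hgap 2,
      sq_nonneg (fnorm (A - G1 * G1ᵀ) - fnorm (B - G2 * G2ᵀ))]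
  have hweyl_sq := pow_le_pow_left₀ (lammin_nonneg (posSemidef_transpose_mul_self _)) hweyl 2
  linarith

/-- matrix form of the paper's appendix Lemma 15.
Eigenvalue separation between the two blocks of the Gram matrix of a nearly
block-diagonally factorized matrix. -/
theorem stmt_8 {p q m : ℕ} (hpm : m ≤ p)
    (G1 : Matrix (Fin p) (Fin m) ℝ) (G2 : Matrix (Fin q) (Fin m) ℝ)
    (G : Matrix (Fin p ⊕ Fin q) (Fin m) ℝ) (hG : G = Matrix.fromRows G1 G2)
    (hfull : (Gᵀ * G).PosDef)
    (A : Matrix (Fin p) (Fin p) ℝ) (B : Matrix (Fin q) (Fin q) ℝ)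
    (hA : A.PosSemidef) (hB : B.PosSemidef)
    (hAB : lammax B ≤ lammin A)
    (C : Matrix (Fin p ⊕ Fin q) (Fin p ⊕ Fin q) ℝ)
    (hC : C = Matrix.fromBlocks A 0 0 B)
    (hclose : fnorm (C - G * Gᵀ) < lammin (Gᵀ * G) / Real.sqrt 2) :
    lammax (G2ᵀ * G2) ≤ lammin (G1ᵀ * G1) :=
  stmt_8_general hpm G1 G2 G hG A B hA hB hAB C hC hclose
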